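/- The Laplace mechanism is ε-differentially private: if f : D → ℝ^k has L1 sensitivity Δf (i.e., ‖f(D) − f(D')‖₁ ≤ Δf for all neighbouring D, D'), then the mechanism outputting f(D) + Z, where Z has i.i.d. coordinates with density (ε/(2Δf))·exp(−ε|z|/Δf), satisfies: for all neighbouring D, D' and every point q ∈ ℝ^k, the ratio of the output densities p_D(q)/p_{D'}(q) is at most exp(ε). -/
import Mathlib


open Real

/-- Laplace mechanism privacy at the level of output densities.
If `f` has L1 sensitivity `Δf` with respect to the neighbouring relation, then the
density of `f(D) + Z` (i.i.d. Laplace(Δf/ε) coordinates) at any point `q` is at most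
`exp ε` times the density of `f(D') + Z` at `q`, for any neighbouring `D, D'`. -/
theorem laplace_mechanism_density_ratio_le_exp
    {Dataset : Type*} (Neighbour : Dataset → Dataset → Prop)
    (k : ℕ) (f : Dataset → Fin k → ℝ) (ε Δf : ℝ) (hε : 0 < ε) (hΔ : 0 < Δf)
    (hsens : ∀ D D', Neighbour D D' → ∑ i, |f D i - f D' i| ≤ Δf)
    (D D' : Dataset) (hDD' : Neighbour D D') (q : Fin k → ℝ) :
    (∏ i, (ε / (2 * Δf)) * exp (-(ε * |f D i - q i|) / Δf)) ≤
      exp ε * ∏ i, (ε / (2 * Δf)) * exp (-(ε * |f D' i - q i|) / Δf) := by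
  have hc : (0:ℝ) ≤ ε / (2 * Δf) := by positivity
  rw [Finset.prod_mul_distrib, Finset.prod_mul_distrib, ← exp_sum, ← exp_sum,
    mul_comm (exp ε), mul_assoc]
  apply mul_le_mul_of_nonneg_left _ (Finset.prod_nonneg fun _ _ => hc)
  rw [← exp_add, exp_le_exp]
  have key : (∑ i, -(ε * |f D i - q i|) / Δf) - (∑ i, -(ε * |f D' i - q i|) / Δf) ≤ ε := by
    rw [← Finset.sum_sub_distrib]
    have h1 : ∀ i ∈ Finset.univ, -(ε * |f D i - q i|) / Δf - -(ε * |f D' i - q i|) / Δf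
        ≤ ε / Δf * |f D i - f D' i| := by
      intro i _
      rw [div_sub_div_same, div_le_iff₀ hΔ]
      have : |f D' i - q i| - |f D i - q i| ≤ |f D i - f D' i| := by
        have := abs_sub_abs_le_abs_sub (f D' i - q i) (f D i - q i)
        rw [show f D' i - q i - (f D i - q i) = -(f D i - f D' i) by ring, abs_neg] at this
        linarith
      have heq : ε / Δf * |f D i - f D' i| * Δf = ε * |f D i - f D' i| := by
        field_simp
      rw [heq]
      nlinarith [mul_le_mul_of_nonneg_left this hε.le]
    calc _ ≤ ∑ i, ε / Δf * |f D i - f D' i| := Finset.sum_le_sum h1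
      _ = ε / Δf * ∑ i, |f D i - f D' i| := by rw [Finset.mul_sum]
      _ ≤ ε / Δf * Δf := by
          apply mul_le_mul_of_nonneg_left (hsens D D' hDD') (by positivity)
      _ = ε := by field_simp
  linarith
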